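/- arXiv:math/0612570 — 3 statements merged into one kernel-verified Lean document; each statement's English description precedes it below -/
import Mathlib

section
/- Let 𝔄 be a unital C*-algebra, 𝔅 ⊆ 𝔄 a unital C*-subalgebra containing the unit of 𝔄, and Φ : 𝔄 → 𝔅 a positive conditional expectation. Let U, V ∈ 𝔄 be such that U − 1 and V are monotonically independent over 𝔅 (the closed subalgebra generated by {U − 1} ∪ 𝔅 carrying index 1 and that generated by {V} ∪ 𝔅 carrying index 2). For W ∈ 𝔄 and z ∈ 𝔅 small define ϑ_W(z) = Φ((1 − zW)⁻¹ zW) and κ_W(z) = (1 + ϑ_W(z))⁻¹ ϑ_W(z). Then there exists ε > 0 such that for all z ∈ 𝔅 with ‖z‖ < ε all the relevant inverses exist and κ_{VU}(z) = κ_U(κ_V(z)). -/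
open scoped BigOperators

/-- An index tuple `j : Fin (ℓ+1) → I` is V-shaped if it is strictly decreasing up to some
position `t` and strictly increasing from `t` on; this encodes the index patterns
`i_m > ⋯ > i_1 < k_1 < ⋯ < k_n` appearing in condition (b) of monotonic independence. -/
def VShaped {I : Type*} [LinearOrder I] {ℓ : ℕ} (j : Fin (ℓ + 1) → I) : Prop :=
  ∃ t : Fin (ℓ + 1),
    (∀ r s : Fin (ℓ + 1), r < s → s ≤ t → j s < j r) ∧
    (∀ r s : Fin (ℓ + 1), t ≤ r → r < s → j r < j s)

/-- A family of subsets `S i` of `A`, indexed by a totally ordered set `I`, is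
monotonically independent with respect to `Φ : A → A`
(`Φ` being a `𝔅`-valued conditional expectation, viewed inside `A`) if:
(a) `Φ (A X_i X_j X_k B) = Φ (A X_i Φ(X_j) X_k B)` whenever `i < j > k` (with the
outer factors `A`, `B` possibly omitted), and
(b) `Φ` factorizes on products whose index tuple decreases strictly and then increases
strictly (`i_m > ⋯ > i_1 < k_1 < ⋯ < k_n`). -/
def MonoIndep {A : Type*} [Monoid A] {I : Type*} [LinearOrder I]
    (Φ : A → A) (S : I → Set A) : Prop :=
  (∀ i j k : I, i < j → k < j → ∀ x ∈ S i, ∀ y ∈ S j, ∀ z ∈ S k,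
      (∀ a b : A, Φ (a * x * y * z * b) = Φ (a * x * Φ y * z * b)) ∧
      (∀ b : A, Φ (x * y * z * b) = Φ (x * Φ y * z * b)) ∧
      (∀ a : A, Φ (a * x * y * z) = Φ (a * x * Φ y * z)) ∧
      Φ (x * y * z) = Φ (x * Φ y * z)) ∧
  (∀ (ℓ : ℕ) (j : Fin (ℓ + 1) → I), VShaped j →
      ∀ x : Fin (ℓ + 1) → A, (∀ r, x r ∈ S (j r)) →
      Φ (List.ofFn x).prod = (List.ofFn fun r => Φ (x r)).prod)

/-- `ϑ_W(z) = Φ((1 - zW)⁻¹ zW)`. -/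
noncomputable def thetaTrans {A : Type*} [Ring A] [Algebra ℂ A]
    (Φ : A →ₗ[ℂ] A) (W z : A) : A :=
  Φ (Ring.inverse (1 - z * W) * (z * W))

/-- `κ_W(z) = (1 + ϑ_W(z))⁻¹ ϑ_W(z)`. -/
noncomputable def kappaTrans {A : Type*} [Ring A] [Algebra ℂ A]
    (Φ : A →ₗ[ℂ] A) (W z : A) : A :=
  Ring.inverse (1 + thetaTrans Φ W z) * thetaTrans Φ W z


/-!
Put `X = U - 1`, `Y = (1 - zV)⁻¹ zV` and `b = Φ Y = ϑ_V(z)`. Then `1 - zVU = (1 - zV)(1 - YX)`,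
and for `w = κ_V(z) = (1 + b)⁻¹ b` also `1 - wU = (1 + b)⁻¹ (1 - bX)`. Expanding `(1 - YX)⁻¹` as a
geometric series, monotone independence replaces every `Y` of a word `Y X Y X ⋯ Y X` by `b`, so
`Φ((1 - zVU)⁻¹) = Φ((1 - bX)⁻¹)(1 + b) = Φ((1 - wU)⁻¹)`. Since `1 + ϑ_W(z) = Φ((1 - zW)⁻¹)`, the
two ϑ-transforms, and hence the two κ-transforms, coincide. Positivity makes `Φ` bounded, so it
commutes with the series, and for small `z` all of them converge.
-/

open Filter Topology

lemma LinearMap.continuous_of_map_star_mul_self_nonneg {A₁ A₂ : Type*} [CStarAlgebra A₁]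
    [PartialOrder A₁] [StarOrderedRing A₁] [CStarAlgebra A₂] [PartialOrder A₂]
    [StarOrderedRing A₂] (Φ : A₁ →ₗ[ℂ] A₂) (hpos : ∀ a, 0 ≤ Φ (star a * a)) :
    Continuous Φ := by
  have hΦ : ∀ x, 0 ≤ x → 0 ≤ Φ x := fun x hx => by
    obtain ⟨a, rfl⟩ := CStarAlgebra.nonneg_iff_eq_star_mul_self.mp hx
    exact hpos a
  exact map_continuous (PositiveLinearMap.mk₀ Φ hΦ)

namespace MonoIndep

variable {A : Type*} [Monoid A] {I : Type*} [LinearOrder I] {Φ : A → A} {S : I → Set A}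

lemma map_mul_of_lt (h : MonoIndep Φ S) {i j : I} (hij : i < j) {x y : A} (hx : x ∈ S j)
    (hy : y ∈ S i) : Φ (x * y) = Φ x * Φ y := by
  have hV : VShaped ![j, i] :=
    ⟨1, by simp [Fin.forall_fin_two, hij], by simp [Fin.forall_fin_two]⟩
  simpa [List.ofFn_succ] using h.2 1 ![j, i] hV ![x, y] (by simp [Fin.forall_fin_two, hx, hy])

lemma map_mul_mul_of_lt (h : MonoIndep Φ S) {i j : I} (hij : i < j) {x y x' : A}
    (hx : x ∈ S j) (hy : y ∈ S i) (hx' : x' ∈ S j) : Φ (x * y * x') = Φ x * Φ y * Φ x' := by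
  have hV : VShaped ![j, i, j] := ⟨1,
    by intro r s; fin_cases r <;> fin_cases s <;> simp [hij],
    by intro r s; fin_cases r <;> fin_cases s <;> simp [hij]⟩
  simpa [List.ofFn_succ, mul_assoc] using
    h.2 2 ![j, i, j] hV ![x, y, x'] (by simp [Fin.forall_fin_succ, hx, hy, hx'])

end MonoIndep

section RingInverse

variable {R : Type*} [Ring R]

lemma Ring.one_sub_inverse_mul {u : R} (hu : IsUnit u) (c : R) :
    1 - Ring.inverse u * c = Ring.inverse u * (u - c) := by
  rw [mul_sub, Ring.inverse_mul_cancel u hu]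

lemma Ring.inverse_one_sub_eq_one_add {a : R} (ha : IsUnit (1 - a)) :
    Ring.inverse (1 - a) = 1 + Ring.inverse (1 - a) * a := by
  calc Ring.inverse (1 - a) = Ring.inverse (1 - a) * ((1 - a) + a) := by
        rw [sub_add_cancel, mul_one]
    _ = 1 + Ring.inverse (1 - a) * a := by rw [mul_add, Ring.inverse_mul_cancel _ ha]

lemma one_add_thetaTrans [Algebra ℂ R] {Φ : R →ₗ[ℂ] R} (hΦ1 : Φ 1 = 1) {W z : R}
    (hu : IsUnit (1 - z * W)) : 1 + thetaTrans Φ W z = Φ (Ring.inverse (1 - z * W)) := by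
  rw [thetaTrans, Ring.inverse_one_sub_eq_one_add hu, map_add, hΦ1,
    ← Ring.inverse_one_sub_eq_one_add hu]

lemma thetaTrans_eq_of_map_inverse_eq [Algebra ℂ R] {Φ : R →ₗ[ℂ] R} (hΦ1 : Φ 1 = 1)
    {W W' z z' : R} (hu : IsUnit (1 - z * W)) (hu' : IsUnit (1 - z' * W'))
    (h : Φ (Ring.inverse (1 - z * W)) = Φ (Ring.inverse (1 - z' * W'))) :
    thetaTrans Φ W z = thetaTrans Φ W' z' :=
  add_left_cancel (by rw [one_add_thetaTrans hΦ1 hu, one_add_thetaTrans hΦ1 hu', h])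

lemma Ring.inverse_one_sub_mul_one_add {a X : R} (ha : IsUnit (1 - a))
    (hYX : IsUnit (1 - Ring.inverse (1 - a) * a * X)) :
    IsUnit (1 - a * (1 + X)) ∧ Ring.inverse (1 - a * (1 + X)) =
      Ring.inverse (1 - Ring.inverse (1 - a) * a * X) * (1 + Ring.inverse (1 - a) * a) := by
  have key : 1 - Ring.inverse (1 - a) * a * X = Ring.inverse (1 - a) * (1 - a * (1 + X)) := by
    rw [mul_assoc, Ring.one_sub_inverse_mul ha]
    noncomm_ring
  rw [key, Ring.inverse_mul (Or.inl ha.ringInverse), Ring.inverse_inverse ha,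
    ← Ring.inverse_one_sub_eq_one_add ha, mul_assoc, Ring.mul_inverse_cancel _ ha, mul_one]
  exact ⟨ha.ringInverse.mul_left_iff.mp (key ▸ hYX), rfl⟩

lemma map_inverse_one_sub_inverse_one_add_mul [Algebra ℂ R] {Φ : R →ₗ[ℂ] R} {b X : R}
    (hb : IsUnit (1 + b)) (hbX : IsUnit (1 - b * X))
    (hright : ∀ w, Φ (w * (1 + b)) = Φ w * (1 + b)) :
    IsUnit (1 - Ring.inverse (1 + b) * b * (1 + X)) ∧
      Φ (Ring.inverse (1 - Ring.inverse (1 + b) * b * (1 + X))) =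
        Φ (Ring.inverse (1 - b * X)) * (1 + b) := by
  have key : 1 - Ring.inverse (1 + b) * b * (1 + X) = Ring.inverse (1 + b) * (1 - b * X) := by
    rw [mul_assoc, Ring.one_sub_inverse_mul hb]
    noncomm_ring
  rw [key, Ring.inverse_mul (Or.inl hb.ringInverse), Ring.inverse_inverse hb, hright]
  exact ⟨hb.ringInverse.mul hbX, rfl⟩

end RingInverse

lemma map_mul_mul_pow_mul {A : Type*} [Monoid A] (Φ : A → A) (S : Submonoid A)
    {X Y b c d : A} (hX : X ∈ S) (hb : b ∈ S)
    (hcontract : ∀ w ∈ S, ∀ a, Φ (Y * w * Y * X * a) = Φ (Y * w * b * X * a))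
    (hbase : ∀ w ∈ S, Φ (Y * w * c) = b * Φ w * d) (n : ℕ) :
    ∀ w ∈ S, Φ (Y * w * (Y * X) ^ n * c) = b * Φ (w * (b * X) ^ n) * d := by
  induction n with
  | zero => intro w hw; simpa using hbase w hw
  | succ n ih =>
    intro w hw
    calc Φ (Y * w * (Y * X) ^ (n + 1) * c) = Φ (Y * w * Y * X * ((Y * X) ^ n * c)) := by
          simp only [pow_succ', mul_assoc]
      _ = Φ (Y * (w * b * X) * (Y * X) ^ n * c) := by
          rw [hcontract w hw]; simp only [mul_assoc]
      _ = b * Φ (w * (b * X) ^ (n + 1)) * d := by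
          rw [ih _ (S.mul_mem (S.mul_mem hw hb) hX)]; simp only [pow_succ', mul_assoc]

lemma Filter.Tendsto.eventually_norm_lt_one {α E : Type*} [SeminormedAddGroup E] {l : Filter α}
    {f : α → E} (hf : Tendsto f l (𝓝 0)) : ∀ᶠ x in l, ‖f x‖ < 1 := by
  simpa using hf.norm.eventually_lt_const (by simp : ‖(0 : E)‖ < 1)

section Resolvent

variable {A : Type*} [NormedRing A] [CompleteSpace A]

lemma inverse_one_sub_mem_of_isClosed {S : Type*} [SetLike S A] [SubsemiringClass S A] {T : S}
    (hT : IsClosed (T : Set A)) {a : A} (ha : a ∈ T) (h : ‖a‖ < 1) :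
    Ring.inverse (1 - a) ∈ T := by
  rw [← geom_series_eq_inverse a h]
  exact hT.mem_of_tendsto (summable_geometric_of_norm_lt_one h).hasSum.tendsto_sum_nat
    (Eventually.of_forall fun n => sum_mem fun i _ => pow_mem ha i)

lemma Filter.Tendsto.inverse_one_sub_mul_self {α : Type*} {l : Filter α} {f : α → A}
    (hf : Tendsto f l (𝓝 0)) : Tendsto (fun x => Ring.inverse (1 - f x) * f x) l (𝓝 0) := by
  have hsub : Tendsto (fun x => 1 - f x) l (𝓝 1) := by simpa using tendsto_const_nhds.sub hf
  have hinv : Tendsto (fun x => Ring.inverse (1 - f x)) l (𝓝 1) := by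
    simpa [Function.comp_def] using (NormedRing.inverse_continuousAt (1 : Aˣ)).tendsto.comp hsub
  simpa using hinv.mul hf

lemma Filter.Tendsto.eventually_isUnit_one_add {α : Type*} {l : Filter α} {f : α → A}
    (hf : Tendsto f l (𝓝 0)) : ∀ᶠ x in l, IsUnit (1 + f x) :=
  (by simpa using tendsto_const_nhds.add hf : Tendsto (fun x => 1 + f x) l (𝓝 1)).eventually
    (Units.isOpen.mem_nhds isUnit_one)

section ComplexAlgebra

variable [Algebra ℂ A] {Φ : A →ₗ[ℂ] A}

lemma map_inverse_one_sub_mul_mul (hΦ : Continuous Φ) (S : Submonoid A)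
    {X Y b c d : A} (hX : X ∈ S) (hb : b ∈ S)
    (hcontract : ∀ w ∈ S, ∀ a, Φ (Y * w * Y * X * a) = Φ (Y * w * b * X * a))
    (hbase : ∀ w ∈ S, Φ (Y * w * c) = b * Φ w * d)
    (hYX : ‖Y * X‖ < 1) (hbX : ‖b * X‖ < 1) :
    Φ (Ring.inverse (1 - Y * X) * c) = Φ c + b * Φ (X * Ring.inverse (1 - b * X)) * d := by
  have hYX_sum := summable_geometric_of_norm_lt_one hYX
  have hbX_sum := summable_geometric_of_norm_lt_one hbX
  have hterm : ∀ n, Φ ((Y * X) ^ (n + 1) * c) = b * Φ (X * (b * X) ^ n) * d := fun n => by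
    rw [pow_succ']
    exact map_mul_mul_pow_mul Φ S hX hb hcontract hbase n X hX
  have hΦYX_sum : Summable fun n => Φ ((Y * X) ^ n * c) := (hYX_sum.mul_right c).map Φ hΦ
  have hΦbX_sum : Summable fun n => Φ (X * (b * X) ^ n) := (hbX_sum.mul_left X).map Φ hΦ
  calc Φ (Ring.inverse (1 - Y * X) * c) = ∑' n, Φ ((Y * X) ^ n * c) := by
        rw [← geom_series_eq_inverse _ hYX, ← hYX_sum.tsum_mul_right,
          (hYX_sum.mul_right c).map_tsum Φ hΦ]
    _ = Φ c + ∑' n, b * Φ (X * (b * X) ^ n) * d := by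
        rw [hΦYX_sum.tsum_eq_zero_add, pow_zero, one_mul]
        simp only [hterm]
    _ = Φ c + b * Φ (X * Ring.inverse (1 - b * X)) * d := by
        rw [← geom_series_eq_inverse _ hbX, ← hbX_sum.tsum_mul_left,
          (hbX_sum.mul_left X).map_tsum Φ hΦ, ← hΦbX_sum.tsum_mul_left,
          ← (hΦbX_sum.mul_left b).tsum_mul_right]

lemma map_inverse_one_sub_mul_one_add (hΦ : Continuous Φ) (hΦ1 : Φ 1 = 1)
    {S T : Subalgebra ℂ A}
    (hind : MonoIndep (fun x => Φ x) (fun t : Fin 2 => if t = 0 then (S : Set A) else T))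
    (hT : IsClosed (T : Set A)) {a X Y b : A} (ha : a ∈ T) (ha1 : ‖a‖ < 1)
    (hY : Ring.inverse (1 - a) * a = Y) (hbY : Φ Y = b) (hX : X ∈ S) (hb : b ∈ S)
    (hleft : ∀ w, Φ (b * w) = b * Φ w) (hYX : ‖Y * X‖ < 1) (hbX : ‖b * X‖ < 1) :
    IsUnit (1 - a * (1 + X)) ∧
      Φ (Ring.inverse (1 - a * (1 + X))) = Φ (Ring.inverse (1 - b * X)) * (1 + b) := by
  subst hbY
  obtain ⟨hunit, hinv⟩ := Ring.inverse_one_sub_mul_one_add (isUnit_one_sub_of_norm_lt_one ha1)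
    (hY ▸ isUnit_one_sub_of_norm_lt_one hYX)
  have hYT : Y ∈ (if (1 : Fin 2) = 0 then (S : Set A) else T) := by
    simpa [← hY] using mul_mem (inverse_one_sub_mem_of_isClosed hT ha ha1) ha
  have hS : ∀ w ∈ S, w ∈ (if (0 : Fin 2) = 0 then (S : Set A) else T) := fun w hw => by
    simpa using hw
  have hcontract : ∀ w ∈ S, ∀ c, Φ (Y * w * Y * X * c) = Φ (Y * w * Φ Y * X * c) :=
    fun w hw c => (hind.1 0 1 0 (by decide) (by decide) w (hS w hw) Y hYT X (hS X hX)).1 Y c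
  have hres := map_inverse_one_sub_mul_mul hΦ S.toSubmonoid (c := 1) (d := 1) hX hb hcontract
    (fun w hw => by simpa using hind.map_mul_of_lt (by decide) hYT (hS w hw)) hYX hbX
  have hresY := map_inverse_one_sub_mul_mul hΦ S.toSubmonoid hX hb hcontract
    (fun w hw => hind.map_mul_mul_of_lt (by decide) hYT (hS w hw) hYT) hYX hbX
  -- With `Y := b` the contraction is trivial, so the same expansion computes `Φ (1 - b X)⁻¹`.
  have hres_b := map_inverse_one_sub_mul_mul hΦ ⊤ (Y := Φ Y) (c := 1) (d := 1) trivial trivial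
    (fun _ _ _ => rfl) (fun w _ => by simpa using hleft w) hbX hbX
  refine ⟨hunit, ?_⟩
  rw [mul_one] at hres hres_b
  rw [hinv, hY, mul_add, mul_one, map_add, hres, hresY, hres_b, hΦ1]
  noncomm_ring

lemma tendsto_thetaTrans (hΦ : Continuous Φ) (W : A) :
    Tendsto (thetaTrans Φ W) (𝓝 0) (𝓝 0) := by
  have hzW : Tendsto (fun z : A => z * W) (𝓝 0) (𝓝 0) := by
    simpa using (continuous_mul_const W).tendsto 0
  have h := (hΦ.tendsto 0).comp hzW.inverse_one_sub_mul_self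
  rwa [map_zero] at h

lemma eventually_norm_lt_one_and_isUnit (hΦ : Continuous Φ) (V X : A) :
    ∀ᶠ z in 𝓝 (0 : A), ‖z * V‖ < 1 ∧ ‖Ring.inverse (1 - z * V) * (z * V) * X‖ < 1 ∧
      ‖thetaTrans Φ V z * X‖ < 1 ∧ IsUnit (1 + thetaTrans Φ V z) ∧
      IsUnit (1 + thetaTrans Φ (V * (1 + X)) z) := by
  have hzV : Tendsto (fun z : A => z * V) (𝓝 0) (𝓝 0) := by
    simpa using (continuous_mul_const V).tendsto 0
  have hYX : Tendsto (fun z => Ring.inverse (1 - z * V) * (z * V) * X) (𝓝 0) (𝓝 0) := by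
    simpa using hzV.inverse_one_sub_mul_self.mul_const X
  have hbX : Tendsto (fun z => thetaTrans Φ V z * X) (𝓝 0) (𝓝 0) := by
    simpa using (tendsto_thetaTrans hΦ V).mul_const X
  filter_upwards [hzV.eventually_norm_lt_one, hYX.eventually_norm_lt_one,
    hbX.eventually_norm_lt_one, (tendsto_thetaTrans hΦ V).eventually_isUnit_one_add,
    (tendsto_thetaTrans hΦ (V * (1 + X))).eventually_isUnit_one_add] with z h1 h2 h3 h4 h5
    using ⟨h1, h2, h3, h4, h5⟩

end ComplexAlgebra

end Resolvent

theorem kappaTrans_comp_general {A : Type*} [CStarAlgebra A] [PartialOrder A] [StarOrderedRing A]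
    (B : StarSubalgebra ℂ A)
    (Φ : A →ₗ[ℂ] A)
    (hmem : ∀ x : A, Φ x ∈ B)
    (hfix : ∀ b ∈ B, Φ b = b)
    (hbimod : ∀ b₁ ∈ B, ∀ b₂ ∈ B, ∀ x : A, Φ (b₁ * x * b₂) = b₁ * Φ x * b₂)
    (hpos : ∀ a : A, 0 ≤ Φ (star a * a))
    (U V : A)
    (hindep : MonoIndep (fun x => Φ x)
      (fun t : Fin 2 =>
        if t = 0 then
          ((Algebra.adjoin ℂ ({U - 1} ∪ (B : Set A))).topologicalClosure : Set A)
        else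
          ((Algebra.adjoin ℂ ({V} ∪ (B : Set A))).topologicalClosure : Set A))) :
    ∃ ε > (0 : ℝ), ∀ z ∈ B, ‖z‖ < ε →
      IsUnit (1 - z * (V * U)) ∧ IsUnit (1 - z * V) ∧
      IsUnit (1 + thetaTrans Φ V z) ∧ IsUnit (1 - kappaTrans Φ V z * U) ∧
      IsUnit (1 + thetaTrans Φ (V * U) z) ∧
      IsUnit (1 + thetaTrans Φ U (kappaTrans Φ V z)) ∧
      kappaTrans Φ (V * U) z = kappaTrans Φ U (kappaTrans Φ V z) := by
  obtain ⟨X, rfl⟩ : ∃ X, U = 1 + X := ⟨U - 1, by abel⟩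
  simp only [add_sub_cancel_left] at hindep
  have hΦ1 : Φ 1 = 1 := hfix 1 B.one_mem
  have hΦ := Φ.continuous_of_map_star_mul_self_nonneg hpos
  have hcl : ∀ {s : Set A}, ∀ x ∈ s, x ∈ (Algebra.adjoin ℂ s).topologicalClosure :=
    fun x hx => Subalgebra.le_topologicalClosure _ (Algebra.subset_adjoin hx)
  obtain ⟨ε, hε, hsmall⟩ :=
    Metric.eventually_nhds_iff.mp (eventually_norm_lt_one_and_isUnit hΦ V X)
  refine ⟨ε, hε, fun z hz hzε => ?_⟩
  obtain ⟨hzV, hYX, hbX, hθV, hθVU⟩ := hsmall (by simpa using hzε)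
  have hbB : thetaTrans Φ V z ∈ B := hmem _
  obtain ⟨hVU, hΦVU⟩ := map_inverse_one_sub_mul_one_add hΦ hΦ1 hindep (b := thetaTrans Φ V z)
    (Subalgebra.isClosed_topologicalClosure _) (mul_mem (hcl z (Or.inr hz)) (hcl V (Or.inl rfl)))
    hzV rfl rfl (hcl X (Or.inl rfl)) (hcl _ (Or.inr hbB))
    (fun w => by simpa using hbimod _ hbB 1 B.one_mem w) hYX hbX
  obtain ⟨hU, hΦU⟩ := map_inverse_one_sub_inverse_one_add_mul hθV
    (isUnit_one_sub_of_norm_lt_one hbX)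
    (fun w => by simpa using hbimod 1 B.one_mem _ (add_mem B.one_mem hbB) w)
  rw [mul_assoc] at hVU hΦVU
  have hθ : thetaTrans Φ (V * (1 + X)) z = thetaTrans Φ (1 + X) (kappaTrans Φ V z) :=
    thetaTrans_eq_of_map_inverse_eq hΦ1 hVU hU (hΦVU.trans hΦU.symm)
  exact ⟨hVU, isUnit_one_sub_of_norm_lt_one hzV, hθV, hU, hθVU, hθ ▸ hθVU,
    by rw [kappaTrans, kappaTrans, hθ]⟩

/-- first identity of Theorem 3.4: if `U - 1` and `V` are monotonically
independent over `𝔅`, then `κ_{VU}(z) = κ_U(κ_V(z))` for `z` near `0 ∈ 𝔅`. -/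
theorem kappaTrans_comp {A : Type*} [CStarAlgebra A] [PartialOrder A] [StarOrderedRing A]
    (B : StarSubalgebra ℂ A) (hBclosed : IsClosed (B : Set A))
    (Φ : A →ₗ[ℂ] A)
    (hmem : ∀ x : A, Φ x ∈ B)
    (hfix : ∀ b ∈ B, Φ b = b)
    (hbimod : ∀ b₁ ∈ B, ∀ b₂ ∈ B, ∀ x : A, Φ (b₁ * x * b₂) = b₁ * Φ x * b₂)
    (hpos : ∀ a : A, 0 ≤ Φ (star a * a))
    (U V : A)
    (hindep : MonoIndep (fun x => Φ x)
      (fun t : Fin 2 =>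
        if t = 0 then
          ((Algebra.adjoin ℂ ({U - 1} ∪ (B : Set A))).topologicalClosure : Set A)
        else
          ((Algebra.adjoin ℂ ({V} ∪ (B : Set A))).topologicalClosure : Set A))) :
    ∃ ε > (0 : ℝ), ∀ z ∈ B, ‖z‖ < ε →
      IsUnit (1 - z * (V * U)) ∧ IsUnit (1 - z * V) ∧
      IsUnit (1 + thetaTrans Φ V z) ∧ IsUnit (1 - kappaTrans Φ V z * U) ∧
      IsUnit (1 + thetaTrans Φ (V * U) z) ∧
      IsUnit (1 + thetaTrans Φ U (kappaTrans Φ V z)) ∧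
      kappaTrans Φ (V * U) z = kappaTrans Φ U (kappaTrans Φ V z) :=
  kappaTrans_comp_general B Φ hmem hfix hbimod hpos U V hindep
end

section
/- Let 𝔄 be a complex algebra, 𝔅 ⊆ 𝔄 a subalgebra, and Φ : 𝔄 → 𝔅 a conditional expectation. Let X, Y ∈ 𝔄 be such that the subalgebra generated by {X} ∪ 𝔅 (index 1) and the subalgebra generated by {Y} ∪ 𝔅 (index 2) are monotonically independent over 𝔅. For W ∈ 𝔄 define 𝔥^W_1(b) = b and, for r ≥ 2, 𝔥^W_r(c₁,…,c_r) = Φ(c₁ W c₂ W ⋯ c_{r−1} W c_r). Then for every n ≥ 2 and all b₁,…,bₙ ∈ 𝔅: Φ(b₁ (X+Y) b₂ (X+Y) ⋯ b_{n−1} (X+Y) bₙ) = Σ_{k=1}^{n} Σ_{p₁+⋯+p_k = n, p_j ≥ 1} 𝔥^X_k( 𝔥^Y_{p₁}(b₁,…,b_{p₁}), 𝔥^Y_{p₂}(b_{q₂+1},…,b_{q₂+p₂}), …, 𝔥^Y_{p_k}(b_{q_k+1},…,bₙ) ), where q_j = p₁ + ⋯ + p_{j−1}. -/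
open scoped BigOperators

/-- The word `c₁ W c₂ W ⋯ c_{r-1} W c_r` built from a list `[c₁, …, c_r]`;
applying `Φ` to it gives the multilinear moment `𝔥^W_r(c₁, …, c_r)`
(for `r = 1` and `c₁ ∈ 𝔅` one recovers `𝔥^W_1(c) = c` since `Φ(c) = c`). -/
def mWord {A : Type*} [Ring A] (W : A) : List A → A
  | [] => 1
  | c :: cs => c * (cs.map fun d => W * d).prod

/-!
Expanding every factor `X + Y` of `b₁ (X+Y) b₂ ⋯ (X+Y) bₙ` writes the word as a sum over the
compositions `(p₁, …, p_k)` of `n`: the slots filled with `X` cut `b₁, …, bₙ` into blocks, and the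
slots inside a block are filled with `Y`. The summand is `y₁ X y₂ X ⋯ X y_k`, where `y_j` is the
`Y`-word of the `j`-th block and lies in the algebra generated by `Y` and `𝔅`. Under `Φ`, condition
(a) for `X y_j X` replaces every interior `y_j` by `Φ(y_j)`. What remains is `y₁ m y_k` with `m` in
the algebra generated by `X` and `𝔅`, and condition (b) for the V-shaped pattern `2 > 1 < 2`
together with the bimodule property gives `Φ(y₁ m y_k) = Φ(y₁) Φ(m) Φ(y_k) = Φ(Φ(y₁) m Φ(y_k))`.
-/

lemma List.prod_map_mul_left_mul {M : Type*} [Monoid M] (W : M) (l : List M) :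
    (l.map (W * ·)).prod * W = W * (l.map (· * W)).prod := by
  induction l with
  | nil => simp
  | cons c cs ih => simp only [List.map_cons, List.prod_cons, mul_assoc, ih]

section mWord

variable {A : Type*} [Ring A]

@[simp] lemma mWord_singleton (W a : A) : mWord W [a] = a := by
  simp [mWord]

lemma mWord_cons_of_ne_nil (W a : A) {l : List A} (hl : l ≠ []) :
    mWord W (a :: l) = a * W * mWord W l := by
  obtain ⟨x, xs, rfl⟩ := List.exists_cons_of_ne_nil hl
  simp [mWord, mul_assoc]

lemma mWord_mul_cons (W x a : A) (l : List A) :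
    mWord W (x * a :: l) = x * mWord W (a :: l) := by
  simp [mWord, mul_assoc]

lemma mWord_cons_append_singleton (W u v : A) (l : List A) :
    mWord W (u :: (l ++ [v])) = u * (W * (l.map (· * W)).prod) * v := by
  simp only [mWord, List.map_append, List.prod_append, List.map_singleton, List.prod_singleton,
    ← List.prod_map_mul_left_mul, mul_assoc]

lemma mWord_mem {S : Submonoid A} {W : A} (hW : W ∈ S) {l : List A} (hl : ∀ x ∈ l, x ∈ S) :
    mWord W l ∈ S := by
  rcases l with _ | ⟨c, l⟩
  · exact S.one_mem
  · exact mul_mem (hl c List.mem_cons_self) (Submonoid.list_prod_mem _ (by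
      simpa using fun x hx => mul_mem hW (hl x (List.mem_cons_of_mem c hx))))

end mWord

namespace Composition

variable {n : ℕ}

lemma eq_ones_of_le_one (hn : n ≤ 1) (c : Composition n) : c = ones n := by
  rw [eq_ones_iff_le_length]
  rcases Nat.le_one_iff_eq_zero_or_eq_one.1 hn with rfl | rfl
  · exact Nat.zero_le _
  · exact c.length_pos_iff.2 Nat.one_pos

lemma sum_eq_ones_of_le_one {M : Type*} [AddCommMonoid M] (hn : n ≤ 1)
    (f : Composition n → M) : ∑ c, f c = f (ones n) :=
  Fintype.sum_eq_single _ fun c hc => absurd (c.eq_ones_of_le_one hn) hc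

def consOne (c : Composition n) : Composition (n + 1) where
  blocks := 1 :: c.blocks
  blocks_pos := by simpa using fun _ => c.blocks_pos
  blocks_sum := by simp [c.blocks_sum, add_comm]

@[simp] lemma consOne_blocks (c : Composition n) : c.consOne.blocks = 1 :: c.blocks := rfl

def succHead (c : Composition n) : Composition (n + 1) where
  blocks := (c.blocks.headI + 1) :: c.blocks.tail
  blocks_pos := by simpa using fun _ h => c.blocks_pos (List.mem_of_mem_tail h)
  blocks_sum := by
    rcases h : c.blocks with _ | ⟨p, t⟩ <;> simp [← c.blocks_sum, h, add_right_comm]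

@[simp] lemma succHead_blocks (c : Composition n) :
    c.succHead.blocks = (c.blocks.headI + 1) :: c.blocks.tail := rfl

lemma exists_blocks_eq_cons (hn : 0 < n) (c : Composition n) : ∃ p t, c.blocks = p :: t :=
  List.exists_cons_of_ne_nil (mt c.blocks_eq_nil.1 hn.ne')

lemma bijective_sumElim_consOne_succHead (hn : 0 < n) :
    Function.Bijective (Sum.elim (consOne (n := n)) succHead) := by
  have head_pos : ∀ c : Composition n, 0 < c.blocks.headI := fun c => by
    obtain ⟨p, t, h⟩ := exists_blocks_eq_cons hn c
    simpa [h] using c.blocks_pos (h ▸ List.mem_cons_self)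
  constructor
  · rintro (c | c) (d | d) h <;> have hb := congrArg blocks h <;>
      simp only [Sum.elim_inl, Sum.elim_inr, consOne_blocks, succHead_blocks,
        List.cons.injEq] at hb
    · exact congrArg Sum.inl (Composition.ext hb.2)
    · have := head_pos d; omega
    · have := head_pos c; omega
    · obtain ⟨p, t, hc⟩ := exists_blocks_eq_cons hn c
      obtain ⟨q, s, hd⟩ := exists_blocks_eq_cons hn d
      simp only [hc, hd, List.headI_cons, List.tail_cons, add_left_inj] at hb
      exact congrArg Sum.inr (Composition.ext (by rw [hc, hd, hb.1, hb.2]))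
  · intro d
    obtain ⟨p, t, hd⟩ := exists_blocks_eq_cons (Nat.succ_pos n) d
    have hp := d.blocks_pos (hd ▸ List.mem_cons_self)
    have ht : ∀ {i}, i ∈ t → 0 < i := fun h => d.blocks_pos (hd ▸ List.mem_cons_of_mem _ h)
    have hsum : p + t.sum = n + 1 := by simpa [hd] using d.blocks_sum
    rcases Nat.lt_or_ge 1 p with h1 | h1
    · refine ⟨.inr ⟨(p - 1) :: t, ?_, by rw [List.sum_cons]; omega⟩, Composition.ext ?_⟩
      · simpa [h1] using fun _ => ht
      · show (p - 1 + 1) :: t = d.blocks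
        rw [hd, Nat.sub_add_cancel h1.le]
    · refine ⟨.inl ⟨t, ht, by omega⟩, Composition.ext ?_⟩
      show 1 :: t = d.blocks
      rw [hd, show p = 1 by omega]

lemma sum_univ_succ {M : Type*} [AddCommMonoid M] (hn : 0 < n) (f : Composition (n + 1) → M) :
    ∑ c, f c = ∑ c : Composition n, f c.consOne + ∑ c : Composition n, f c.succHead := by
  rw [← Fintype.sum_bijective _ (bijective_sumElim_consOne_succHead hn) _ f (fun _ => rfl),
    Fintype.sum_sum_type]
  rfl

end Composition

namespace List

variable {α : Type*} {n : ℕ}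

lemma splitWrtComposition_consOne (a : α) (l : List α) (c : Composition n) :
    (a :: l).splitWrtComposition c.consOne = [a] :: l.splitWrtComposition c := by
  simp [splitWrtComposition, splitWrtCompositionAux_cons]

lemma splitWrtComposition_succHead (hn : 0 < n) (a : α) (l : List α) (c : Composition n) :
    (a :: l).splitWrtComposition c.succHead
      = (a :: (l.splitWrtComposition c).headI) :: (l.splitWrtComposition c).tail := by
  obtain ⟨p, t, h⟩ := c.exists_blocks_eq_cons hn
  simp [splitWrtComposition, splitWrtCompositionAux_cons, h]

lemma splitWrtComposition_ne_nil (hn : 0 < n) (l : List α) (c : Composition n) :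
    l.splitWrtComposition c ≠ [] :=
  ne_nil_of_length_pos (by simpa using c.length_pos_iff.2 hn)

lemma splitWrtComposition_ofFn (b : ℕ → α) (c : Composition n) :
    (ofFn fun t : Fin n => b t).splitWrtComposition c
      = ofFn fun i : Fin c.length =>
          ofFn fun j : Fin (c.blocksFun i) => b (c.sizeUpTo i + j) := by
  refine ext_getElem (by simp) fun i _ h₂ => ?_
  have hi : i < c.length := by simpa using h₂
  rw [getElem_splitWrtComposition, List.getElem_ofFn]
  refine ext_getElem ?_ fun j _ _ => by simp
  have hle := c.sizeUpTo_le (i + 1)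
  have hsucc : c.sizeUpTo (i + 1) = c.sizeUpTo i + c.blocksFun ⟨i, hi⟩ :=
    c.sizeUpTo_succ' ⟨i, hi⟩
  simp only [length_drop, length_take, length_ofFn]
  omega

end List

theorem mWord_add_eq_sum {A : Type*} [Ring A] (X Y : A) (L : List A) :
    mWord (X + Y) L
      = ∑ c : Composition L.length, mWord X ((L.splitWrtComposition c).map (mWord Y)) := by
  induction L using List.twoStepInduction with
  | nil =>
    rw [List.length_nil, Composition.sum_eq_ones_of_le_one zero_le_one]
    simp [List.splitWrtComposition, List.splitWrtCompositionAux, mWord]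
  | singleton a =>
    rw [List.length_singleton, Composition.sum_eq_ones_of_le_one le_rfl]
    simp [List.splitWrtComposition, List.splitWrtCompositionAux]
  | cons_cons a x xs _ ih =>
    have hn : 0 < (x :: xs).length := Nat.succ_pos _
    rw [List.length_cons, Composition.sum_univ_succ hn,
      mWord_cons_of_ne_nil _ _ (List.cons_ne_nil _ _), ih, mul_add, add_mul,
      Finset.mul_sum, Finset.mul_sum]
    -- `X` in the first slot makes `a` a block of its own, `Y` attaches it to the next block.
    congr 1
    all_goals
      refine Finset.sum_congr rfl fun c _ => ?_
      obtain ⟨q, qs, hsplit⟩ :=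
        List.exists_cons_of_ne_nil (List.splitWrtComposition_ne_nil hn (x :: xs) c)
    · simp only [List.splitWrtComposition_consOne, hsplit, List.map_cons, mWord_singleton]
      rw [mWord_cons_of_ne_nil _ _ (List.cons_ne_nil _ _)]
    · have hq : q ≠ [] := List.ne_nil_of_length_pos
        (List.length_pos_of_mem_splitWrtComposition (hsplit ▸ List.mem_cons_self))
      simp only [List.splitWrtComposition_succHead hn, hsplit, List.headI_cons, List.tail_cons,
        List.map_cons]
      rw [mWord_cons_of_ne_nil _ _ hq, mWord_mul_cons]

lemma vShaped_three {I : Type*} [LinearOrder I] {i j k : I} (hji : j < i) (hjk : j < k) :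
    VShaped ![i, j, k] := by
  refine ⟨1, fun r s hrs hs => ?_, fun r s hr hrs => ?_⟩
  · fin_cases r <;> fin_cases s <;> simp_all
  · fin_cases r <;> fin_cases s <;> simp_all

lemma MonoIndep.map_mul_mul {A I : Type*} [Monoid A] [LinearOrder I] {Φ : A → A}
    {S : I → Set A} (h : MonoIndep Φ S) {i j k : I} (hji : j < i) (hjk : j < k)
    {x y z : A} (hx : x ∈ S i) (hy : y ∈ S j) (hz : z ∈ S k) :
    Φ (x * y * z) = Φ x * Φ y * Φ z := by
  have hmem : ∀ r, ![x, y, z] r ∈ S (![i, j, k] r) := by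
    intro r; fin_cases r <;> assumption
  simpa [List.ofFn_succ, mul_assoc] using h.2 2 _ (vShaped_three hji hjk) _ hmem

section Collapse

variable {A : Type*} [Ring A] {Φ : A → A} {X : A} {𝔛 : Submonoid A} {𝔜 : Set A}

lemma apply_mul_prod_map_mul_mul_eq
    (hpeak : ∀ y ∈ 𝔜, ∀ a t, Φ (a * X * y * X * t) = Φ (a * X * Φ y * X * t))
    {l : List A} (hl : ∀ y ∈ l, y ∈ 𝔜) (a t : A) :
    Φ (a * (X * (l.map (· * X)).prod) * t)
      = Φ (a * (X * ((l.map Φ).map (· * X)).prod) * t) := by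
  induction l generalizing a with
  | nil => rfl
  | cons y l ih =>
    have hy := hl y List.mem_cons_self
    calc Φ (a * (X * ((y :: l).map (· * X)).prod) * t)
        = Φ (a * X * y * X * ((l.map (· * X)).prod * t)) := by
          simp only [List.map_cons, List.prod_cons, mul_assoc]
      _ = Φ ((a * X * Φ y) * (X * (l.map (· * X)).prod) * t) := by
          rw [hpeak y hy]; simp only [mul_assoc]
      _ = Φ ((a * X * Φ y) * (X * ((l.map Φ).map (· * X)).prod) * t) :=
          ih (fun z hz => hl z (List.mem_cons_of_mem y hz)) _
      _ = Φ (a * (X * (((y :: l).map Φ).map (· * X)).prod) * t) := by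
          simp only [List.map_cons, List.prod_cons, mul_assoc]

theorem apply_mWord_eq_apply_mWord_map (hidem : ∀ x, Φ (Φ x) = Φ x)
    (hbimod : ∀ x y z, Φ (Φ x * y * Φ z) = Φ x * Φ y * Φ z)
    (hX : X ∈ 𝔛) (hΦ𝔛 : ∀ x, Φ x ∈ 𝔛)
    (hpeak : ∀ y ∈ 𝔜, ∀ a t, Φ (a * X * y * X * t) = Φ (a * X * Φ y * X * t))
    (hvalley : ∀ u ∈ 𝔜, ∀ m ∈ 𝔛, ∀ v ∈ 𝔜, Φ (u * m * v) = Φ u * Φ m * Φ v)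
    {l : List A} (hl : ∀ y ∈ l, y ∈ 𝔜) :
    Φ (mWord X l) = Φ (mWord X (l.map Φ)) := by
  rcases l with _ | ⟨u, l⟩
  · rfl
  rcases l.eq_nil_or_concat' with rfl | ⟨l, v, rfl⟩
  · simp [hidem]
  have hu := hl u List.mem_cons_self
  have hv := hl v (by simp)
  have hm : X * ((l.map Φ).map (· * X)).prod ∈ 𝔛 :=
    mul_mem hX (Submonoid.list_prod_mem _ (by simpa using fun y _ => mul_mem (hΦ𝔛 y) hX))
  calc Φ (mWord X (u :: (l ++ [v])))
      = Φ (u * (X * ((l.map Φ).map (· * X)).prod) * v) := by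
        rw [mWord_cons_append_singleton,
          apply_mul_prod_map_mul_mul_eq hpeak (fun y hy => hl y (by simp [hy]))]
    _ = Φ (Φ u * (X * ((l.map Φ).map (· * X)).prod) * Φ v) := by
        rw [hvalley u hu _ hm v hv, hbimod]
    _ = Φ (mWord X ((u :: (l ++ [v])).map Φ)) := by
        rw [List.map_cons, List.map_append, List.map_singleton, mWord_cons_append_singleton]

end Collapse

theorem hSeries_comp_general {A : Type*} [Ring A] [Algebra ℂ A]
    (B : Subalgebra ℂ A)
    (Φ : A →ₗ[ℂ] A)
    (hmem : ∀ x : A, Φ x ∈ B)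
    (hfix : ∀ b ∈ B, Φ b = b)
    (hbimod : ∀ b₁ ∈ B, ∀ b₂ ∈ B, ∀ x : A, Φ (b₁ * x * b₂) = b₁ * Φ x * b₂)
    (X Y : A)
    (hindep : MonoIndep (fun x => Φ x)
      (fun t : Fin 2 =>
        if t = 0 then (Algebra.adjoin ℂ ({X} ∪ (B : Set A)) : Set A)
        else (Algebra.adjoin ℂ ({Y} ∪ (B : Set A)) : Set A)))
    (n : ℕ) (b : ℕ → A) (hb : ∀ t, b t ∈ B) :
    Φ (mWord (X + Y) (List.ofFn fun t : Fin n => b t)) =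
      ∑ c : Composition n,
        Φ (mWord X (List.ofFn fun i : Fin c.length =>
          Φ (mWord Y (List.ofFn fun j : Fin (c.blocksFun i) =>
            b (c.sizeUpTo i + j))))) := by
  set 𝔛 := Algebra.adjoin ℂ ({X} ∪ (B : Set A))
  set 𝔜 := Algebra.adjoin ℂ ({Y} ∪ (B : Set A))
  have hX : X ∈ 𝔛 := Algebra.subset_adjoin (.inl rfl)
  have hY : Y ∈ 𝔜 := Algebra.subset_adjoin (.inl rfl)
  have hB𝔛 : ∀ x ∈ B, x ∈ 𝔛 := fun _ hx => Algebra.subset_adjoin (.inr hx)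
  have hB𝔜 : ∀ x ∈ B, x ∈ 𝔜 := fun _ hx => Algebra.subset_adjoin (.inr hx)
  have hpeak : ∀ y ∈ (𝔜 : Set A), ∀ a t,
      Φ (a * X * y * X * t) = Φ (a * X * Φ y * X * t) :=
    fun y hy => (hindep.1 0 1 0 (by decide) (by decide)
      X (by simpa using hX) y (by simpa using hy) X (by simpa using hX)).1
  have hvalley : ∀ u ∈ (𝔜 : Set A), ∀ m ∈ 𝔛.toSubmonoid, ∀ v ∈ (𝔜 : Set A),
      Φ (u * m * v) = Φ u * Φ m * Φ v := fun u hu m hm v hv =>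
    hindep.map_mul_mul (i := 1) (j := 0) (k := 1) (by decide) (by decide)
      (by simpa using hu) (by simpa using hm) (by simpa using hv)
  rw [mWord_add_eq_sum, List.length_ofFn, map_sum]
  refine Finset.sum_congr rfl fun c _ => ?_
  have hblocks : ∀ i : Fin c.length, mWord Y (List.ofFn fun j : Fin (c.blocksFun i) =>
      b (c.sizeUpTo i + j)) ∈ 𝔜 := fun i =>
    mWord_mem (S := 𝔜.toSubmonoid) hY (by simpa using fun j => hB𝔜 _ (hb _))
  rw [List.splitWrtComposition_ofFn, List.map_ofFn,
    apply_mWord_eq_apply_mWord_map (fun x => hfix _ (hmem x))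
      (fun x y z => hbimod _ (hmem x) _ (hmem z) y) hX (fun x => hB𝔛 _ (hmem x)) hpeak hvalley
      (by simpa using hblocks),
    List.map_ofFn]
  rfl

/-- Theorem 3.7, componentwise: if `X` and `Y` are monotonically
independent over `𝔅`, then the moments of `X + Y` are given by the composition of the
multilinear function series `𝔥_X` and `𝔥_Y`, the inner sum running over all
compositions `(p₁, …, p_k)` of `n`. -/
theorem hSeries_comp {A : Type*} [Ring A] [Algebra ℂ A]
    (B : Subalgebra ℂ A)
    (Φ : A →ₗ[ℂ] A)
    (hmem : ∀ x : A, Φ x ∈ B)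
    (hfix : ∀ b ∈ B, Φ b = b)
    (hbimod : ∀ b₁ ∈ B, ∀ b₂ ∈ B, ∀ x : A, Φ (b₁ * x * b₂) = b₁ * Φ x * b₂)
    (X Y : A)
    (hindep : MonoIndep (fun x => Φ x)
      (fun t : Fin 2 =>
        if t = 0 then (Algebra.adjoin ℂ ({X} ∪ (B : Set A)) : Set A)
        else (Algebra.adjoin ℂ ({Y} ∪ (B : Set A)) : Set A)))
    (n : ℕ) (hn : 2 ≤ n) (b : ℕ → A) (hb : ∀ t, b t ∈ B) :
    Φ (mWord (X + Y) (List.ofFn fun t : Fin n => b t)) =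
      ∑ c : Composition n,
        Φ (mWord X (List.ofFn fun i : Fin c.length =>
          Φ (mWord Y (List.ofFn fun j : Fin (c.blocksFun i) =>
            b (c.sizeUpTo i + j))))) :=
  hSeries_comp_general B Φ hmem hfix hbimod X Y hindep n b hb
end

section
/- Let 𝔅 be a unital algebra and 𝔄 an algebra containing 𝔅 as a subalgebra. Let 𝔄₂ ⊆ 𝔄 be a subalgebra containing 𝔅, and 𝔄₁ = 𝔅 ⊕ 𝔄₁⁰ a subalgebra of 𝔄, where 𝔄₁⁰ is a subalgebra with 𝔅·𝔄₁⁰ ⊆ 𝔄₁⁰ and 𝔄₁⁰·𝔅 ⊆ 𝔄₁⁰. Let Φ : 𝔄 → 𝔅 be a conditional expectation satisfying the monotonic product relations: for all a, a' ∈ 𝔄₁⁰, b ∈ 𝔄₂ and α, β ∈ 𝔄: Φ(α a b a' β) = Φ(α a Φ₂(b) a' β), Φ(b a β) = Φ₂(b) Φ(a β), Φ(α a b) = Φ(α a) Φ₂(b), where Φ₂ = Φ|_{𝔄₂} (and the corresponding relations with α and/or β omitted). Then for every n ≥ 1, all b₀, b₁, …, bₙ ∈ 𝔄₂ and all a₁,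 …, aₙ ∈ 𝔄₁⁰: Φ(b₀ a₁ b₁ a₂ ⋯ aₙ bₙ) = Φ(Φ₂(b₀) a₁ Φ₂(b₁) a₂ ⋯ aₙ Φ₂(bₙ)), where the argument on the right-hand side lies in 𝔄₁. -/
/-!
For a word `b₀ a₁ b₁ ⋯ aₙ bₙ`, the relation `Φ(b a β) = Φ(b) Φ(a β)` splits off `Φ(b₀)`, which the
bimodule property turns back into the letter `Φ(b₀)`. The rest is interiorized letter by letter
from the left: `Φ(a b a' β) = Φ(a Φ(b) a' β)` replaces `b₁` by `Φ(b₁)`, and since `a₁ Φ(b₁) a₂`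
lies again in `𝔄₁⁰`, the same step applies to the shorter word starting with it; the last letter
is handled by `Φ(a b) = Φ(a) Φ(b)`. For `n ≥ 1` the interiorized word lies in `𝔄₁⁰` itself,
`𝔄₁⁰` being closed under products and under multiplication by `𝔅` on both sides.
-/

theorem list_prod_mem_of_ne_nil {M S : Type*} [Monoid M] [SetLike S M] [MulMemClass S M]
    {s : S} : ∀ {l : List M}, l ≠ [] → (∀ x ∈ l, x ∈ s) → l.prod ∈ s
  | [x], _, hl => by simpa using hl x (List.mem_singleton_self x)
  | x :: y :: l, _, hl => by
    rw [List.prod_cons]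
    exact mul_mem (hl x List.mem_cons_self)
      (list_prod_mem_of_ne_nil (List.cons_ne_nil y l) fun z hz => hl z (List.mem_cons_of_mem x hz))

section AlternatingWord

variable {A B S : Type*} [Monoid A] [SetLike S A] [MulMemClass S A]
  (ι : B → A) (Φ : A → B) (A₂ : Set A) (A₁₀ : S)

def alternatingProd (f : A → A) (L : List (A × A)) : A :=
  (L.map fun p => p.1 * f p.2).prod

@[simp]
theorem alternatingProd_nil (f : A → A) : alternatingProd f [] = 1 := rfl

@[simp]
theorem alternatingProd_cons (f : A → A) (p : A × A) (L : List (A × A)) :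
    alternatingProd f (p :: L) = p.1 * f p.2 * alternatingProd f L := rfl

theorem map_mul_mul_alternatingProd_eq [Mul B]
    (hA₁₀B : ∀ (c : B), ∀ a ∈ A₁₀, a * ι c ∈ A₁₀)
    (hright : ∀ (c : B) (x : A), Φ (x * ι c) = Φ x * c)
    (hrel₂ : ∀ a ∈ A₁₀, ∀ a' ∈ A₁₀, ∀ w ∈ A₂, ∀ β : A,
      Φ (a * w * a' * β) = Φ (a * ι (Φ w) * a' * β))
    (hrel₈ : ∀ a ∈ A₁₀, ∀ w ∈ A₂, Φ (a * w) = Φ a * Φ w)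
    (L : List (A × A)) (hL : ∀ p ∈ L, p.1 ∈ A₁₀ ∧ p.2 ∈ A₂) {a b : A} (ha : a ∈ A₁₀)
    (hb : b ∈ A₂) :
    Φ (a * b * alternatingProd id L) =
      Φ (a * ι (Φ b) * alternatingProd (ι ∘ Φ) L) := by
  induction L generalizing a b with
  | nil => simp only [alternatingProd_nil, mul_one, hrel₈ a ha b hb, hright]
  | cons p L ih =>
    obtain ⟨⟨ha', hb'⟩, hL⟩ := List.forall_mem_cons.1 hL
    have ih' := ih hL (mul_mem (hA₁₀B (Φ b) a ha) ha') hb'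
    simp only [alternatingProd_cons, id, Function.comp_apply, ← mul_assoc] at ih' ⊢
    rw [← ih']
    simpa only [mul_assoc] using hrel₂ a ha p.1 ha' b hb (p.2 * alternatingProd id L)

theorem map_mul_alternatingProd_eq [Mul B]
    (hA₁₀B : ∀ (c : B), ∀ a ∈ A₁₀, a * ι c ∈ A₁₀)
    (hfix : ∀ c : B, Φ (ι c) = c)
    (hleft : ∀ (c : B) (x : A), Φ (ι c * x) = c * Φ x)
    (hright : ∀ (c : B) (x : A), Φ (x * ι c) = Φ x * c)
    (hrel₂ : ∀ a ∈ A₁₀, ∀ a' ∈ A₁₀, ∀ w ∈ A₂, ∀ β : A,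
      Φ (a * w * a' * β) = Φ (a * ι (Φ w) * a' * β))
    (hrel₅ : ∀ w ∈ A₂, ∀ a ∈ A₁₀, ∀ β : A, Φ (w * a * β) = Φ w * Φ (a * β))
    (hrel₈ : ∀ a ∈ A₁₀, ∀ w ∈ A₂, Φ (a * w) = Φ a * Φ w)
    (L : List (A × A)) (hL : ∀ p ∈ L, p.1 ∈ A₁₀ ∧ p.2 ∈ A₂) {w : A} (hw : w ∈ A₂) :
    Φ (w * alternatingProd id L) =
      Φ (ι (Φ w) * alternatingProd (ι ∘ Φ) L) := by
  cases L with
  | nil => simp only [alternatingProd_nil, mul_one, hfix]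
  | cons p L =>
    obtain ⟨⟨ha, hb⟩, hL⟩ := List.forall_mem_cons.1 hL
    have hinner := map_mul_mul_alternatingProd_eq ι Φ A₂ A₁₀ hA₁₀B hright hrel₂ hrel₈ L hL ha hb
    simp only [alternatingProd_cons, id, Function.comp_apply, mul_assoc] at hinner ⊢
    rw [hleft, ← hinner, ← hrel₅ w hw p.1 ha, mul_assoc]

theorem mul_alternatingProd_mem
    (hBA₁₀ : ∀ (c : B), ∀ a ∈ A₁₀, ι c * a ∈ A₁₀)
    (hA₁₀B : ∀ (c : B), ∀ a ∈ A₁₀, a * ι c ∈ A₁₀)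
    {L : List (A × A)} (hne : L ≠ []) (hL : ∀ p ∈ L, p.1 ∈ A₁₀) (c : B) :
    ι c * alternatingProd (ι ∘ Φ) L ∈ A₁₀ :=
  hBA₁₀ c _ <| list_prod_mem_of_ne_nil (mt List.map_eq_nil_iff.1 hne) fun _ hx => by
    obtain ⟨p, hp, rfl⟩ := List.mem_map.1 hx
    exact hA₁₀B _ _ (hL p hp)

end AlternatingWord

theorem monotonicProduct_welldefined_general {B A : Type*}
    [Ring B] [Algebra ℂ B] [Ring A] [Algebra ℂ A]
    (ι : B →ₐ[ℂ] A)
    (A₂ : Subalgebra ℂ A)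
    (A₁₀ : NonUnitalSubalgebra ℂ A)
    (hBA₁₀ : ∀ (c : B), ∀ a ∈ A₁₀, ι c * a ∈ A₁₀)
    (hA₁₀B : ∀ (c : B), ∀ a ∈ A₁₀, a * ι c ∈ A₁₀)
    (Φ : A →ₗ[ℂ] B)
    (hfix : ∀ c : B, Φ (ι c) = c)
    (hbimod : ∀ (c₁ c₂ : B) (x : A), Φ (ι c₁ * x * ι c₂) = c₁ * Φ x * c₂)
    -- the defining relations of the monotonic product `Φ₁ ▷ Φ₂`
    (hrel₂ : ∀ a ∈ A₁₀, ∀ a' ∈ A₁₀, ∀ w ∈ A₂, ∀ β : A,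
      Φ (a * w * a' * β) = Φ (a * ι (Φ w) * a' * β))
    (hrel₅ : ∀ w ∈ A₂, ∀ a ∈ A₁₀, ∀ β : A, Φ (w * a * β) = Φ w * Φ (a * β))
    (hrel₈ : ∀ a ∈ A₁₀, ∀ w ∈ A₂, Φ (a * w) = Φ a * Φ w) :
    ∀ (n : ℕ), 1 ≤ n → ∀ bs as : ℕ → A,
      (∀ j, j ≤ n → bs j ∈ A₂) → (∀ j, 1 ≤ j → j ≤ n → as j ∈ A₁₀) →
      Φ (bs 0 * (List.ofFn fun t : Fin n => as (t.1 + 1) * bs (t.1 + 1)).prod) =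
        Φ (ι (Φ (bs 0)) *
          (List.ofFn fun t : Fin n => as (t.1 + 1) * ι (Φ (bs (t.1 + 1)))).prod) ∧
      ∃ (c : B) (a₀ : A), a₀ ∈ A₁₀ ∧
        ι (Φ (bs 0)) *
          (List.ofFn fun t : Fin n => as (t.1 + 1) * ι (Φ (bs (t.1 + 1)))).prod =
        ι c + a₀ := by
  intro n hn bs as hbs has
  have hleft : ∀ (c : B) (x : A), Φ (ι c * x) = c * Φ x := fun c x => by
    simpa using hbimod c 1 x
  have hright : ∀ (c : B) (x : A), Φ (x * ι c) = Φ x * c := fun c x => by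
    simpa using hbimod 1 c x
  set L := List.ofFn fun t : Fin n => (as (t.1 + 1), bs (t.1 + 1))
  have hL : ∀ p ∈ L, p.1 ∈ A₁₀ ∧ p.2 ∈ A₂ := by
    simp only [L, List.forall_mem_ofFn_iff]
    exact fun t => ⟨has _ (by omega) t.2, hbs _ t.2⟩
  have hne : L ≠ [] := by simpa [L] using Nat.one_le_iff_ne_zero.1 hn
  have hword : ∀ f : A → A, alternatingProd f L =
      (List.ofFn fun t : Fin n => as (t.1 + 1) * f (bs (t.1 + 1))).prod := fun f => by
    rw [alternatingProd, List.map_ofFn]; rfl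
  refine ⟨?_, 0, _, ?_, by rw [map_zero, zero_add]⟩
  · simpa only [hword, id, Function.comp_apply] using map_mul_alternatingProd_eq ι Φ A₂ A₁₀
      hA₁₀B hfix hleft hright hrel₂ hrel₅ hrel₈ L hL (hbs 0 (Nat.zero_le n))
  · simpa only [hword, Function.comp_apply] using
      mul_alternatingProd_mem ι Φ A₁₀ hBA₁₀ hA₁₀B hne (fun p hp => (hL p hp).1) (Φ (bs 0))

/-- well-definedness formula after Definition 6.1: the monotonic
product conditional expectation `Φ = Φ₁ ▷ Φ₂` satisfies, on alternating words
`b₀ a₁ b₁ ⋯ aₙ bₙ` (`b_j ∈ 𝔄₂`, `a_j ∈ 𝔄₁⁰`),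
`Φ(b₀ a₁ b₁ ⋯ aₙ bₙ) = Φ(Φ₂(b₀) a₁ Φ₂(b₁) ⋯ aₙ Φ₂(bₙ))`, the argument on the
right-hand side lying in `𝔄₁ = 𝔅 ⊕ 𝔄₁⁰`. -/
theorem monotonicProduct_welldefined {B A : Type*}
    [Ring B] [Algebra ℂ B] [Ring A] [Algebra ℂ A]
    (ι : B →ₐ[ℂ] A) (hι : Function.Injective ι)
    (A₂ : Subalgebra ℂ A) (hA₂B : ∀ c : B, ι c ∈ A₂)
    (A₁₀ : NonUnitalSubalgebra ℂ A)
    (hBA₁₀ : ∀ (c : B), ∀ a ∈ A₁₀, ι c * a ∈ A₁₀)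
    (hA₁₀B : ∀ (c : B), ∀ a ∈ A₁₀, a * ι c ∈ A₁₀)
    (hdirect : ∀ (c : B), ∀ a ∈ A₁₀, ι c + a = 0 → c = 0 ∧ a = 0)
    (Φ : A →ₗ[ℂ] B)
    (hfix : ∀ c : B, Φ (ι c) = c)
    (hbimod : ∀ (c₁ c₂ : B) (x : A), Φ (ι c₁ * x * ι c₂) = c₁ * Φ x * c₂)
    -- the defining relations of the monotonic product `Φ₁ ▷ Φ₂`
    (hrel₁ : ∀ a ∈ A₁₀, ∀ a' ∈ A₁₀, ∀ w ∈ A₂, ∀ α β : A,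
      Φ (α * a * w * a' * β) = Φ (α * a * ι (Φ w) * a' * β))
    (hrel₂ : ∀ a ∈ A₁₀, ∀ a' ∈ A₁₀, ∀ w ∈ A₂, ∀ β : A,
      Φ (a * w * a' * β) = Φ (a * ι (Φ w) * a' * β))
    (hrel₃ : ∀ a ∈ A₁₀, ∀ a' ∈ A₁₀, ∀ w ∈ A₂, ∀ α : A,
      Φ (α * a * w * a') = Φ (α * a * ι (Φ w) * a'))
    (hrel₄ : ∀ a ∈ A₁₀, ∀ a' ∈ A₁₀, ∀ w ∈ A₂,
      Φ (a * w * a') = Φ (a * ι (Φ w) * a'))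
    (hrel₅ : ∀ w ∈ A₂, ∀ a ∈ A₁₀, ∀ β : A, Φ (w * a * β) = Φ w * Φ (a * β))
    (hrel₆ : ∀ w ∈ A₂, ∀ a ∈ A₁₀, Φ (w * a) = Φ w * Φ a)
    (hrel₇ : ∀ a ∈ A₁₀, ∀ w ∈ A₂, ∀ α : A, Φ (α * a * w) = Φ (α * a) * Φ w)
    (hrel₈ : ∀ a ∈ A₁₀, ∀ w ∈ A₂, Φ (a * w) = Φ a * Φ w) :
    ∀ (n : ℕ), 1 ≤ n → ∀ bs as : ℕ → A,
      (∀ j, j ≤ n → bs j ∈ A₂) → (∀ j, 1 ≤ j → j ≤ n → as j ∈ A₁₀) →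
      Φ (bs 0 * (List.ofFn fun t : Fin n => as (t.1 + 1) * bs (t.1 + 1)).prod) =
        Φ (ι (Φ (bs 0)) *
          (List.ofFn fun t : Fin n => as (t.1 + 1) * ι (Φ (bs (t.1 + 1)))).prod) ∧
      ∃ (c : B) (a₀ : A), a₀ ∈ A₁₀ ∧
        ι (Φ (bs 0)) *
          (List.ofFn fun t : Fin n => as (t.1 + 1) * ι (Φ (bs (t.1 + 1)))).prod =
        ι c + a₀ :=
  monotonicProduct_welldefined_general ι A₂ A₁₀ hBA₁₀ hA₁₀B Φ hfix hbimod hrel₂ hrel₅ hrel₈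
end
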